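/- Let h be a symmetric 2-tensor on ℝ⁷ and i(h) = Σ ε_{ikl} h_{ij} eʲ∧eᵏ∧eˡ the associated 3-form. For Z₁, Z₂ ∈ span(e₁,e₂,e₃), define B_h(Z₁,Z₂) := (Z₁⌟i(h) ∧ Z₂⌟φ)|_{π} where π = span(e₄,…,e₇). Then B_h(Z₁,Z₂) = (4 h(Z₁,Z₂) + 2 tr(h|_π) g(Z₁,Z₂)) · e⁴∧e⁵∧e⁶∧e⁷, where tr(h|_π) = h₄₄+h₅₅+h₆₆+h₇₇. -/

import Mathlib

open scoped BigOperators

noncomputable section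

/-- standard basis vectors of ℝ⁷ (0-indexed: `e 0` = e₁, …, `e 6` = e₇) -/
def e (i : Fin 7) : Fin 7 → ℝ := fun j => if i = j then 1 else 0

/-- the 3-form eᵃ ∧ eᵇ ∧ eᶜ -/
def d3 (a b c : Fin 7) (u v w : Fin 7 → ℝ) : ℝ :=
  u a * (v b * w c - v c * w b) - u b * (v a * w c - v c * w a) + u c * (v a * w b - v b * w a)

/-- the standard G₂ 3-form φ = e¹²³ + e¹∧(e⁴⁵+e⁶⁷) + e²∧(e⁴⁶−e⁵⁷) − e³∧(e⁴⁷+e⁵⁶) -/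
def phi (u v w : Fin 7 → ℝ) : ℝ :=
  d3 0 1 2 u v w + d3 0 3 4 u v w + d3 0 5 6 u v w + d3 1 3 5 u v w
    - d3 1 4 6 u v w - d3 2 3 6 u v w - d3 2 4 5 u v w

/-- the 4-form eᵃ ∧ eᵇ ∧ eᶜ ∧ eᵈ -/
def d4 (a b c d : Fin 7) (u v w x : Fin 7 → ℝ) : ℝ :=
  Matrix.det !![u a, u b, u c, u d; v a, v b, v c, v d; w a, w b, w c, w d; x a, x b, x c, x d]

/-- ψ = ⋆φ = e⁴⁵⁶⁷ + e²³∧(e⁴⁵+e⁶⁷) − e¹³∧(e⁴⁶−e⁵⁷) − e¹²∧(e⁴⁷+e⁵⁶) -/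
def psi (u v w x : Fin 7 → ℝ) : ℝ :=
  d4 3 4 5 6 u v w x + d4 1 2 3 4 u v w x + d4 1 2 5 6 u v w x - d4 0 2 3 5 u v w x
    + d4 0 2 4 6 u v w x - d4 0 1 3 6 u v w x - d4 0 1 4 5 u v w x

/-- the standard coassociative 4-plane π = span(e₄,e₅,e₆,e₇) -/
def pi4 : Submodule ℝ (Fin 7 → ℝ) := Submodule.span ℝ {e 3, e 4, e 5, e 6}

/-- its orthogonal (associative) complement π⊥ = span(e₁,e₂,e₃) -/
def pi3 : Submodule ℝ (Fin 7 → ℝ) := Submodule.span ℝ {e 0, e 1, e 2}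

/-- inclusion of coordinates of π⊥ into ℝ⁷ -/
def emb3 (z : Fin 3 → ℝ) : Fin 7 → ℝ := fun i =>
  if i = 0 then z 0 else if i = 1 then z 1 else if i = 2 then z 2 else 0

/-- inclusion of coordinates of π into ℝ⁷ -/
def emb4 (v : Fin 4 → ℝ) : Fin 7 → ℝ := fun i =>
  if i = 3 then v 0 else if i = 4 then v 1 else if i = 5 then v 2 else if i = 6 then v 3 else 0

/-- the structure constants ε_{ijk} of φ: φ = (1/6) Σ ε_{ijk} eⁱ∧eʲ∧eᵏ -/
def eps (i j k : Fin 7) : ℝ := phi (e i) (e j) (e k)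

/-- Bryant's injection i : S²(ℝ⁷) → Λ³(ℝ⁷), i(h) = Σ_{i,j,k,l} ε_{ikl} h_{ij} eʲ∧eᵏ∧eˡ -/
def iForm (h : Matrix (Fin 7) (Fin 7) ℝ) (u v w : Fin 7 → ℝ) : ℝ :=
  ∑ i : Fin 7, ∑ j : Fin 7, ∑ k : Fin 7, ∑ l : Fin 7, eps i k l * h i j * d3 j k l u v w

/-- wedge product of two 2-forms on ℝ⁷, evaluated on 4 vectors -/
def wedge22 (a b : (Fin 7 → ℝ) → (Fin 7 → ℝ) → ℝ) (v : Fin 4 → (Fin 7 → ℝ)) : ℝ :=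
  (∑ σ : Equiv.Perm (Fin 4), ((Equiv.Perm.sign σ : ℤ) : ℝ) *
    (a (v (σ 0)) (v (σ 1)) * b (v (σ 2)) (v (σ 3)))) / 4

/-- B_h(Z₁,Z₂) := (Z₁⌟i(h) ∧ Z₂⌟φ)|_π, as the coefficient of vol₄ = e⁴∧e⁵∧e⁶∧e⁷,
i.e. the value on (e₄,e₅,e₆,e₇); here Z₁, Z₂ ∈ π⊥ have coordinates z₁, z₂. -/
def Bh (h : Matrix (Fin 7) (Fin 7) ℝ) (z₁ z₂ : Fin 3 → ℝ) : ℝ :=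
  wedge22 (fun a b => iForm h (emb3 z₁) a b) (fun a b => phi (emb3 z₂) a b)
    ![e 3, e 4, e 5, e 6]

/-!
Both 2-forms are alternating, so their wedge on (e₄,…,e₇) is the six-term pairing
a₄₅b₆₇ − a₄₆b₅₇ + a₄₇b₅₆ + a₅₆b₄₇ − a₅₇b₄₆ + a₆₇b₄₅. On π the form Z₂⌟φ is Σ_c (Z₂)_c ω_c with
ω₁ = e⁴⁵ + e⁶⁷, ω₂ = e⁴⁶ − e⁵⁷, ω₃ = −(e⁴⁷ + e⁵⁶), so B_h(Z₁,Z₂) = Σ_c (Z₂)_c ⟨Z₁⌟i(h), ω_c⟩,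
where ⟨a, ω₁⟩ = a₄₅ + a₆₇ and so on. The contraction Σ_{k,l} ε_{ikl} eᵏ∧eˡ = 2 eᵢ⌟φ expresses
i(h) through φ, and then ⟨Z₁⌟i(h), ω_c⟩ = 4 (hZ₁)_c + 2 tr(h|_π) (Z₁)_c: the off-diagonal
entries of h on π cancel by the symmetry of h.
-/

open Equiv

-- `decomposeFin_symm_apply_succ` does not fire on the numerals `2` and `3`, which are not
-- syntactically of the form `Fin.succ _`.
theorem Equiv.Perm.decomposeFin_symm_apply_two {n : ℕ} (σ : Perm (Fin (n + 2)))
    (p : Fin (n + 3)) : Perm.decomposeFin.symm (p, σ) 2 = swap 0 p (σ 1).succ :=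
  Perm.decomposeFin_symm_apply_succ σ p 1

theorem Equiv.Perm.decomposeFin_symm_apply_three {n : ℕ} (σ : Perm (Fin (n + 3)))
    (p : Fin (n + 4)) : Perm.decomposeFin.symm (p, σ) 3 = swap 0 p (σ 2).succ :=
  Perm.decomposeFin_symm_apply_succ σ p 2

theorem wedge22_eq_of_antisymm {a b : (Fin 7 → ℝ) → (Fin 7 → ℝ) → ℝ}
    (ha : ∀ x y, a y x = -a x y) (hb : ∀ x y, b y x = -b x y) (v : Fin 4 → Fin 7 → ℝ) :
    wedge22 a b v =
      a (v 0) (v 1) * b (v 2) (v 3) - a (v 0) (v 2) * b (v 1) (v 3)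
        + a (v 0) (v 3) * b (v 1) (v 2) + a (v 1) (v 2) * b (v 0) (v 3)
        - a (v 1) (v 3) * b (v 0) (v 2) + a (v 2) (v 3) * b (v 0) (v 1) := by
  simp only [wedge22, Finset.univ_perm_fin_succ, Nat.succ_eq_add_one, Nat.reduceAdd,
    ← Finset.univ_product_univ, Finset.univ_unique, Perm.default_eq, Finset.product_singleton,
    Fin.isValue, Finset.sum_map, Function.Embedding.coeFn_mk, Finset.sum_product,
    Perm.decomposeFin.symm_sign, ite_mul, one_mul, neg_mul, Perm.decomposeFin_symm_apply_zero,
    Perm.decomposeFin_symm_apply_one, swap_apply_def, Fin.succ_ne_zero, ↓reduceIte,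
    Perm.decomposeFin_symm_apply_two, Perm.decomposeFin_symm_apply_three,
    Perm.decomposeFin_symm_of_one, Perm.sign_swap', one_ne_zero, Fin.sum_univ_succ,
    Fin.succ_zero_eq_one, Fin.succ_one_eq_two, Fin.default_eq_zero, Finset.sum_singleton,
    zero_ne_one, neg_neg, Fin.reduceEq, Fin.reduceSucc, Units.val_one, Int.cast_one, Units.val_neg,
    Int.reduceNeg, Int.cast_neg]
  rw [ha (v 1) (v 0), ha (v 2) (v 0), ha (v 2) (v 1), ha (v 3) (v 0), ha (v 3) (v 1),
    ha (v 3) (v 2), hb (v 1) (v 0), hb (v 2) (v 0), hb (v 2) (v 1), hb (v 3) (v 0),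
    hb (v 3) (v 1), hb (v 3) (v 2)]
  ring

theorem phi_apply_swap (u v w : Fin 7 → ℝ) : phi u w v = -phi u v w := by
  simp only [phi, d3]; ring

theorem sum_eps_mul_sub_eq_two_mul_phi (i : Fin 7) (v w : Fin 7 → ℝ) :
    ∑ k, ∑ l, eps i k l * (v k * w l - v l * w k) = 2 * phi (e i) v w := by
  fin_cases i <;>
    · simp only [Fin.sum_univ_seven, eps, phi, d3, e, Fin.isValue, Fin.reduceEq, ↓reduceIte]
      ring

theorem iForm_apply_swap (h : Matrix (Fin 7) (Fin 7) ℝ) (u v w : Fin 7 → ℝ) :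
    iForm h u w v = -iForm h u v w := by
  simp only [iForm, ← Finset.sum_neg_distrib]
  refine Finset.sum_congr rfl fun i _ => Finset.sum_congr rfl fun j _ =>
    Finset.sum_congr rfl fun k _ => Finset.sum_congr rfl fun l _ => ?_
  simp only [d3]; ring

theorem iForm_eq_sum_phi (h : Matrix (Fin 7) (Fin 7) ℝ) (u v w : Fin 7 → ℝ) :
    iForm h u v w = ∑ i, ∑ j, h i j *
      (u j * (2 * phi (e i) v w) - v j * (2 * phi (e i) u w) + w j * (2 * phi (e i) u v)) := by
  simp only [iForm]
  refine Finset.sum_congr rfl fun i _ => Finset.sum_congr rfl fun j _ => ?_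
  rw [← sum_eps_mul_sub_eq_two_mul_phi i v w, ← sum_eps_mul_sub_eq_two_mul_phi i u w,
    ← sum_eps_mul_sub_eq_two_mul_phi i u v]
  simp only [Finset.mul_sum, ← Finset.sum_sub_distrib, ← Finset.sum_add_distrib]
  refine Finset.sum_congr rfl fun k _ => Finset.sum_congr rfl fun l _ => ?_
  simp only [d3]; ring

section Coefficients

variable {h : Matrix (Fin 7) (Fin 7) ℝ}

theorem iForm_emb3_e3_e4_add_e5_e6 (hsymm : h.IsSymm) (z : Fin 3 → ℝ) :
    iForm h (emb3 z) (e 3) (e 4) + iForm h (emb3 z) (e 5) (e 6)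
      = 4 * (h 0 0 * z 0 + h 1 0 * z 1 + h 2 0 * z 2)
        + 2 * (h 3 3 + h 4 4 + h 5 5 + h 6 6) * z 0 := by
  simp only [iForm_eq_sum_phi, Fin.sum_univ_seven, phi, d3, e, emb3, Fin.isValue, Fin.reduceEq,
    ↓reduceIte, hsymm.apply]
  ring

theorem iForm_emb3_e3_e5_sub_e4_e6 (hsymm : h.IsSymm) (z : Fin 3 → ℝ) :
    iForm h (emb3 z) (e 3) (e 5) - iForm h (emb3 z) (e 4) (e 6)
      = 4 * (h 0 1 * z 0 + h 1 1 * z 1 + h 2 1 * z 2)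
        + 2 * (h 3 3 + h 4 4 + h 5 5 + h 6 6) * z 1 := by
  simp only [iForm_eq_sum_phi, Fin.sum_univ_seven, phi, d3, e, emb3, Fin.isValue, Fin.reduceEq,
    ↓reduceIte, hsymm.apply]
  ring

theorem iForm_emb3_e3_e6_add_e4_e5 (hsymm : h.IsSymm) (z : Fin 3 → ℝ) :
    iForm h (emb3 z) (e 3) (e 6) + iForm h (emb3 z) (e 4) (e 5)
      = -(4 * (h 0 2 * z 0 + h 1 2 * z 1 + h 2 2 * z 2)
        + 2 * (h 3 3 + h 4 4 + h 5 5 + h 6 6) * z 2) := by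
  simp only [iForm_eq_sum_phi, Fin.sum_univ_seven, phi, d3, e, emb3, Fin.isValue, Fin.reduceEq,
    ↓reduceIte, hsymm.apply]
  ring

end Coefficients

/-- For a symmetric 2-tensor h on ℝ⁷ and Z₁, Z₂ ∈ π⊥:
B_h(Z₁,Z₂) = (4 h(Z₁,Z₂) + 2 tr(h|_π) g(Z₁,Z₂)) · vol₄. -/
theorem stmt_10 (h : Matrix (Fin 7) (Fin 7) ℝ) (hsymm : h.IsSymm) (z₁ z₂ : Fin 3 → ℝ) :
    Bh h z₁ z₂
      = 4 * (∑ i : Fin 3, ∑ j : Fin 3, z₁ i * z₂ j *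
            h (Fin.castLE (by norm_num) i) (Fin.castLE (by norm_num) j))
        + 2 * (h 3 3 + h 4 4 + h 5 5 + h 6 6) * (∑ i : Fin 3, z₁ i * z₂ i) := by
  obtain ⟨h34, h56, h35, h46, h36, h45⟩ :
      phi (emb3 z₂) (e 3) (e 4) = z₂ 0 ∧ phi (emb3 z₂) (e 5) (e 6) = z₂ 0 ∧
      phi (emb3 z₂) (e 3) (e 5) = z₂ 1 ∧ phi (emb3 z₂) (e 4) (e 6) = -z₂ 1 ∧
      phi (emb3 z₂) (e 3) (e 6) = -z₂ 2 ∧ phi (emb3 z₂) (e 4) (e 5) = -z₂ 2 := by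
    simp [phi, d3, e, emb3]
  rw [Bh, wedge22_eq_of_antisymm (iForm_apply_swap h _) (phi_apply_swap _)]
  simp only [Matrix.cons_val, h34, h56, h35, h46, h36, h45, Fin.sum_univ_three, Fin.reduceCastLE]
  linear_combination z₂ 0 * iForm_emb3_e3_e4_add_e5_e6 hsymm z₁
    + z₂ 1 * iForm_emb3_e3_e5_sub_e4_e6 hsymm z₁ - z₂ 2 * iForm_emb3_e3_e6_add_e4_e5 hsymm z₁
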